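/- arXiv:2010.04932 — 3 statements merged into one kernel-verified Lean document; each statement's English description precedes it below -/
import Mathlib

section
/- Let $a \geq 0$, $p > 1$, and suppose $\psi : \mathbb{R} \to \mathbb{R}$ is a $C^2$ solution of $\psi'' + a\psi + \psi^p = 0$ on $\mathbb{R}$ with $\psi(t) > 0$ for all $t \in \mathbb{R}$. Then no such $\psi$ exists; i.e., every solution with positive initial value becomes non-positive in finite time or fails to be globally defined as a positive function. -/
/-! A positive solution has `ψ'' = -aψ - ψ^p < 0`, so `ψ` is concave and `ψ'` is strictly
decreasing. A concave function lies below each of its tangent lines, and a nonhorizontal line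
becomes negative somewhere, so a positive concave function on `ℝ` has `ψ' ≡ 0`, which contradicts
the strict monotonicity of `ψ'`. -/

open Set

namespace ConcaveOn

variable {S : Set ℝ} {f : ℝ → ℝ} {x y : ℝ}

lemma le_add_deriv_mul_sub (hf : ConcaveOn ℝ S f) (hx : x ∈ S) (hy : y ∈ S)
    (hfd : DifferentiableAt ℝ f x) : f y ≤ f x + deriv f x * (y - x) := by
  rcases lt_trichotomy x y with hxy | rfl | hyx
  · have h := hf.slope_le_deriv hx hy hxy hfd
    rw [slope_def_field, div_le_iff₀ (sub_pos.2 hxy)] at h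
    linarith
  · simp
  · have h := hf.deriv_le_slope hy hx hyx hfd
    rw [slope_def_field, le_div_iff₀ (sub_pos.2 hyx)] at h
    linarith

lemma deriv_eq_zero_of_forall_pos (hf : ConcaveOn ℝ univ f) (hpos : ∀ y, 0 < f y)
    (hfd : DifferentiableAt ℝ f x) : deriv f x = 0 := by
  by_contra hne
  -- the tangent line at `x` vanishes at `x - f x / f' x`
  have h := hf.le_add_deriv_mul_sub (mem_univ x) (mem_univ (x - f x / deriv f x)) hfd
  rw [sub_sub_cancel_left, mul_neg, mul_div_cancel₀ _ hne, add_neg_cancel] at h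
  exact (hpos _).not_ge h

end ConcaveOn

theorem stmt_7_general (a p : ℝ) (ha : 0 ≤ a) (ψ : ℝ → ℝ)
    (hψ : ContDiff ℝ 2 ψ)
    (hode : ∀ t, deriv (deriv ψ) t + a * ψ t + ψ t ^ p = 0) :
    ¬ (∀ t : ℝ, 0 < ψ t) := by
  intro hpos
  have hψ'' : ∀ t, deriv (deriv ψ) t < 0 := fun t => by
    have := hode t
    have := Real.rpow_pos_of_pos (hpos t) p
    nlinarith [mul_nonneg ha (hpos t).le]
  obtain ⟨hψd, -, hψ'⟩ := (contDiff_succ_iff_deriv (n := 1)).1 hψ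
  have hconc : ConcaveOn ℝ univ ψ :=
    concaveOn_univ_of_deriv2_nonpos hψd (hψ'.differentiable one_ne_zero) fun t => (hψ'' t).le
  have h0 := hconc.deriv_eq_zero_of_forall_pos hpos (hψd 0)
  have h1 := hconc.deriv_eq_zero_of_forall_pos hpos (hψd 1)
  exact (strictAnti_of_deriv_neg hψ'' zero_lt_one).ne (h1.trans h0.symm)

theorem stmt_7 (a p : ℝ) (ha : 0 ≤ a) (hp : 1 < p) (ψ : ℝ → ℝ)
    (hψ : ContDiff ℝ 2 ψ)
    (hode : ∀ t, deriv (deriv ψ) t + a * ψ t + ψ t ^ p = 0) :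
    ¬ (∀ t : ℝ, 0 < ψ t) :=
  stmt_7_general a p ha ψ hψ hode
end

section
/- Let $b > 0$, $a < 0$, $p > 1$, and suppose $\overline{u} : [0, \infty) \to (0, \infty)$ is a bounded $C^2$ function satisfying $\overline{u}'' + b\overline{u}' + a\overline{u} + \overline{u}^p = g(t)$ where $|g(t)| \leq C_0 \overline{u}(t)^p e^{-t}$, with $\overline{u}$ and $\overline{u}'$ bounded. Then $\overline{u}'(t) \to 0$ and $\overline{u}''(t) \to 0$ as $t \to \infty$, and $\overline{u}(t)$ converges either to $0$ or to $(-a)^{\frac{1}{p-1}}$ as $t \to \infty$. -/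
/-!
Multiplying the equation by `u'` shows that the energy `E = u'²/2 + a u²/2 + u^(p+1)/(p+1)`
satisfies `E' = u' g - b u'²` with `|u' g| ≲ e^(-t)`, so `E` is decreasing up to an integrable
error and converges. As `u'²` is uniformly continuous (`u''` is bounded by the equation), Barbalat's
lemma gives `u' → 0`. Applied to `-u'`, whose derivative is `(a u + u^p) + (b u' - g)`, the same
lemma gives `a u + u^p → 0`, and then `u'' → 0` by the equation. Finally, `a c + c^p ≠ 0` for
`c = m / 2`, where `m = (-a)^(1/(p-1))` is the positive zero of `a x + x^p`; hence `u` eventually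
stays on one side of `c`, and converges to `0` below it and to `m` above it.
-/

open Filter Set Topology Real

theorem uniformContinuousOn_of_hasDerivAt_of_abs_le {f f' : ℝ → ℝ} {s : Set ℝ} {C : ℝ}
    (hs : Convex ℝ s) (hf : ∀ x ∈ s, HasDerivAt f (f' x) x) (hC : ∀ x ∈ s, |f' x| ≤ C) :
    UniformContinuousOn f s := by
  refine (hs.lipschitzOnWith_of_nnnorm_hasDerivWithin_le (C := C.toNNReal)
    (fun x hx => (hf x hx).hasDerivWithinAt) fun x hx => ?_).uniformContinuousOn
  rw [← NNReal.coe_le_coe, coe_nnnorm, coe_toNNReal']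
  exact (hC x hx).trans (le_max_left _ _)

/-- Barbalat's lemma, with a perturbation `k → 0` of the derivative. -/
theorem tendsto_zero_of_hasDerivAt_add {F h k : ℝ → ℝ} {L T : ℝ}
    (hF : ∀ x ≥ T, HasDerivAt F (h x + k x) x) (hFL : Tendsto F atTop (𝓝 L))
    (hh : UniformContinuousOn h (Ici T)) (hk : Tendsto k atTop (𝓝 0)) :
    Tendsto h atTop (𝓝 0) := by
  rw [Metric.tendsto_nhds]
  intro ε hε
  obtain ⟨δ, hδ, hhδ⟩ := Metric.uniformContinuousOn_iff.1 hh (ε / 3) (by positivity)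
  have hslope : Tendsto (fun t => F (t + δ / 2) - F t) atTop (𝓝 0) := by
    simpa using (hFL.comp (tendsto_atTop_add_const_right _ (δ / 2) tendsto_id)).sub hFL
  obtain ⟨N, hN⟩ := eventually_atTop.1 (Metric.tendsto_nhds.1 hk (ε / 3) (by positivity))
  filter_upwards [eventually_ge_atTop (max T N),
    Metric.tendsto_nhds.1 hslope (δ / 2 * (ε / 3)) (by positivity)] with t ht hFt
  obtain ⟨htT, htN⟩ := max_le_iff.1 ht
  obtain ⟨ξ, hξ, hξF⟩ := exists_hasDerivAt_eq_slope F (fun x => h x + k x)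
    (by linarith : t < t + δ / 2)
    (fun x hx => (hF x (htT.trans hx.1)).continuousAt.continuousWithinAt)
    (fun x hx => hF x (htT.trans hx.1.le))
  have hht : |h t - h ξ| < ε / 3 := by
    rw [← Real.dist_eq]
    refine hhδ t htT ξ (htT.trans hξ.1.le) ?_
    rw [Real.dist_eq, abs_sub_comm, abs_of_pos (by linarith [hξ.1])]
    linarith [hξ.2]
  have hFξ : |h ξ + k ξ| < ε / 3 := by
    rw [Real.dist_eq, sub_zero] at hFt
    rw [hξF, abs_div, add_sub_cancel_left, abs_of_pos (by positivity : 0 < δ / 2),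
      div_lt_iff₀ (by positivity)]
    linarith
  have hkξ : |k ξ| < ε / 3 := by
    simpa [Real.dist_eq] using hN ξ (htN.trans hξ.1.le)
  rw [Real.dist_eq, sub_zero]
  calc |h t| = |(h t - h ξ) + (h ξ + k ξ) - k ξ| := by ring_nf
    _ ≤ |h t - h ξ| + |h ξ + k ξ| + |k ξ| := by
      grw [abs_sub, abs_add_le]
    _ < ε := by linarith

theorem AntitoneOn.exists_tendsto_atTop {f : ℝ → ℝ} {T : ℝ} (hf : AntitoneOn f (Ici T))
    (hbdd : BddBelow (f '' Ici T)) : ∃ L, Tendsto f atTop (𝓝 L) := by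
  have hanti : Antitone fun x => f (max T x) := fun x y hxy =>
    hf (le_max_left T x) (le_max_left T y) (max_le_max_left T hxy)
  obtain ⟨m, hm⟩ := hbdd
  refine ⟨_, (tendsto_atTop_ciInf hanti ⟨m, ?_⟩).congr' ?_⟩
  · rintro _ ⟨x, rfl⟩
    exact hm ⟨_, le_max_left T x, rfl⟩
  · filter_upwards [eventually_ge_atTop T] with x hx
    rw [max_eq_right hx]

theorem tendsto_zero_of_abs_le_mul_exp_neg {f : ℝ → ℝ} {C T : ℝ}
    (hf : ∀ t ≥ T, |f t| ≤ C * exp (-t)) : Tendsto f atTop (𝓝 0) := by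
  refine squeeze_zero_norm' ?_ (by simpa using tendsto_exp_neg_atTop_nhds_zero.const_mul C)
  filter_upwards [eventually_ge_atTop T] with t ht
  exact hf t ht

theorem eventually_lt_or_eventually_gt_of_continuous {u : ℝ → ℝ} (hu : Continuous u) {c : ℝ}
    (hne : ∀ᶠ t in atTop, u t ≠ c) : (∀ᶠ t in atTop, u t < c) ∨ ∀ᶠ t in atTop, c < u t := by
  obtain ⟨T, hT⟩ := eventually_atTop.1 hne
  rcases (hT T le_rfl).lt_or_gt with hlt | hgt
  · refine .inl (eventually_atTop.2 ⟨T, fun t ht => ?_⟩)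
    by_contra! hle
    obtain ⟨s, hs, rfl⟩ := intermediate_value_Icc ht hu.continuousOn ⟨hlt.le, hle⟩
    exact hT s hs.1 rfl
  · refine .inr (eventually_atTop.2 ⟨T, fun t ht => ?_⟩)
    by_contra! hle
    obtain ⟨s, hs, rfl⟩ := intermediate_value_Icc' ht hu.continuousOn ⟨hle, hgt.le⟩
    exact hT s hs.1 rfl

theorem mul_add_rpow_eq_mul {x : ℝ} (hx : 0 < x) (a p : ℝ) :
    a * x + x ^ p = x * (a + x ^ (p - 1)) := by
  rw [rpow_sub_one hx.ne', mul_add, mul_div_cancel₀ _ hx.ne', mul_comm]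

theorem tendsto_zero_of_tendsto_mul_add_rpow_of_lt {a p c : ℝ} (hp : 1 ≤ p)
    (hc : c ^ (p - 1) < -a) {u : ℝ → ℝ} (hpos : ∀ᶠ t in atTop, 0 < u t)
    (hlt : ∀ᶠ t in atTop, u t < c) (h : Tendsto (fun t => a * u t + u t ^ p) atTop (𝓝 0)) :
    Tendsto u atTop (𝓝 0) := by
  have hκ : 0 < -a - c ^ (p - 1) := by linarith
  refine squeeze_zero_norm' ?_ (by simpa using h.abs.div_const (-a - c ^ (p - 1)))
  filter_upwards [hpos, hlt] with t hut hutc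
  have hpow : u t ^ (p - 1) ≤ c ^ (p - 1) := rpow_le_rpow hut.le hutc.le (by linarith)
  rw [norm_eq_abs, abs_of_pos hut, le_div_iff₀ hκ, mul_add_rpow_eq_mul hut, abs_mul,
    abs_of_pos hut, abs_of_neg (by linarith)]
  nlinarith

theorem tendsto_of_tendsto_mul_add_rpow_of_gt {a p c : ℝ} (ha : a < 0) (hp : 1 < p) (hc : 0 < c)
    {u : ℝ → ℝ} (hgt : ∀ᶠ t in atTop, c < u t)
    (h : Tendsto (fun t => a * u t + u t ^ p) atTop (𝓝 0)) :
    Tendsto u atTop (𝓝 ((-a) ^ (1 / (p - 1)))) := by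
  have hsum : Tendsto (fun t => a + u t ^ (p - 1)) atTop (𝓝 0) := by
    refine squeeze_zero_norm' ?_ (by simpa using h.abs.div_const c)
    filter_upwards [hgt] with t hut
    have hu : 0 < u t := hc.trans hut
    rw [norm_eq_abs, le_div_iff₀ hc, mul_add_rpow_eq_mul hu, abs_mul, abs_of_pos hu, mul_comm]
    exact mul_le_mul_of_nonneg_right hut.le (abs_nonneg _)
  have hpow : Tendsto (fun t => u t ^ (p - 1)) atTop (𝓝 (-a)) := by
    simpa using hsum.sub_const a
  have hroot := ((continuousAt_rpow_const _ (1 / (p - 1)) (.inl (by linarith))).tendsto).comp hpow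
  refine hroot.congr' ?_
  filter_upwards [hgt] with t hut
  rw [Function.comp_apply, one_div, rpow_rpow_inv (hc.trans hut).le (by linarith)]

theorem tendsto_zero_or_tendsto_of_tendsto_mul_add_rpow {a p : ℝ} (ha : a < 0) (hp : 1 < p)
    {u : ℝ → ℝ} (hu : Continuous u) (hpos : ∀ᶠ t in atTop, 0 < u t)
    (h : Tendsto (fun t => a * u t + u t ^ p) atTop (𝓝 0)) :
    Tendsto u atTop (𝓝 0) ∨ Tendsto u atTop (𝓝 ((-a) ^ (1 / (p - 1)))) := by
  set m := (-a) ^ (1 / (p - 1)) with hm_def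
  have hm : 0 < m := rpow_pos_of_pos (by linarith) _
  have hmp : m ^ (p - 1) = -a := by
    rw [hm_def, one_div, rpow_inv_rpow (by linarith) (by linarith)]
  have hc : (m / 2) ^ (p - 1) < -a :=
    hmp ▸ rpow_lt_rpow (by positivity) (by linarith) (by linarith)
  have hne : ∀ᶠ t in atTop, u t ≠ m / 2 := by
    have hval : a * (m / 2) + (m / 2) ^ p ≠ 0 := by
      rw [mul_add_rpow_eq_mul (by positivity)]
      exact mul_ne_zero (by positivity) (by linarith)
    filter_upwards [h.eventually_ne hval.symm] with t ht hut
    rw [hut] at ht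
    exact ht rfl
  rcases eventually_lt_or_eventually_gt_of_continuous hu hne with hlt | hgt
  · exact .inl (tendsto_zero_of_tendsto_mul_add_rpow_of_lt hp.le hc hpos hlt h)
  · exact .inr (tendsto_of_tendsto_mul_add_rpow_of_gt ha hp (by positivity) hgt h)

noncomputable def energy (a p : ℝ) (u : ℝ → ℝ) (t : ℝ) : ℝ :=
  deriv u t ^ 2 / 2 + a * u t ^ 2 / 2 + u t ^ (p + 1) / (p + 1)

theorem hasDerivAt_energy {a p : ℝ} {u : ℝ → ℝ} (hu : ContDiff ℝ 2 u) (hp : 0 ≤ p) (t : ℝ) :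
    HasDerivAt (energy a p u) (deriv u t * (deriv (deriv u) t + a * u t + u t ^ p)) t := by
  have hu₁ := (hu.differentiable two_ne_zero t).hasDerivAt
  have hu₂ := (hu.differentiable_deriv_two t).hasDerivAt
  refine ((((hu₂.pow 2).div_const 2).add (((hu₁.pow 2).const_mul a).div_const 2)).add
    ((hu₁.rpow_const (p := p + 1) (.inr (by linarith))).div_const (p + 1))).congr_deriv ?_
  rw [add_sub_cancel_right]
  field_simp
  ring

section BoundedSolution

variable {a b p C M : ℝ} {u g : ℝ → ℝ}

theorem abs_deriv_mul_le (hu' : ∀ t ≥ 0, |deriv u t| ≤ M)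
    (hg : ∀ t ≥ 0, |g t| ≤ C * exp (-t)) (t : ℝ) (ht : 0 ≤ t) :
    |deriv u t * g t| ≤ M * C * exp (-t) := by
  rw [abs_mul, mul_assoc]
  exact mul_le_mul (hu' t ht) (hg t ht) (abs_nonneg _) ((abs_nonneg _).trans (hu' 0 le_rfl))

theorem exists_abs_deriv_deriv_le (hp : 0 ≤ p) (hC : 0 ≤ C) (hpos : ∀ t ≥ 0, 0 ≤ u t)
    (hu_le : ∀ t ≥ 0, u t ≤ M) (hu' : ∀ t ≥ 0, |deriv u t| ≤ M)
    (heq : ∀ t ≥ 0, deriv (deriv u) t + b * deriv u t + a * u t + u t ^ p = g t)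
    (hg : ∀ t ≥ 0, |g t| ≤ C * exp (-t)) :
    ∃ K, ∀ t ≥ 0, |deriv (deriv u) t| ≤ K := by
  refine ⟨C + |b| * M + |a| * M + M ^ p, fun t ht => ?_⟩
  have hgC : |g t| ≤ C :=
    (hg t ht).trans (mul_le_of_le_one_right hC (exp_le_one_iff.2 (by linarith)))
  have hbu' : |b * deriv u t| ≤ |b| * M := by
    rw [abs_mul]; exact mul_le_mul_of_nonneg_left (hu' t ht) (abs_nonneg b)
  have hau : |a * u t| ≤ |a| * M := by
    rw [abs_mul, abs_of_nonneg (hpos t ht)]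
    exact mul_le_mul_of_nonneg_left (hu_le t ht) (abs_nonneg a)
  have hup : |u t ^ p| ≤ M ^ p := by
    rw [abs_of_nonneg (rpow_nonneg (hpos t ht) p)]
    exact rpow_le_rpow (hpos t ht) (hu_le t ht) hp
  rw [show deriv (deriv u) t = g t - b * deriv u t - a * u t - u t ^ p by linarith [heq t ht]]
  grw [abs_sub, abs_sub, abs_sub]
  linarith

theorem exists_tendsto_energy (hu : ContDiff ℝ 2 u) (hb : 0 ≤ b) (hp : 0 ≤ p) (hC : 0 ≤ C)
    (hpos : ∀ t ≥ 0, 0 ≤ u t) (hu_le : ∀ t ≥ 0, u t ≤ M) (hu' : ∀ t ≥ 0, |deriv u t| ≤ M)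
    (heq : ∀ t ≥ 0, deriv (deriv u) t + b * deriv u t + a * u t + u t ^ p = g t)
    (hg : ∀ t ≥ 0, |g t| ≤ C * exp (-t)) :
    ∃ L, Tendsto (energy a p u) atTop (𝓝 L) := by
  have hM : 0 ≤ M := (abs_nonneg _).trans (hu' 0 le_rfl)
  set G := fun t => energy a p u t + M * C * exp (-t)
  have hG (t : ℝ) : HasDerivAt G
      (deriv u t * (deriv (deriv u) t + a * u t + u t ^ p) + M * C * (exp (-t) * -1)) t :=
    (hasDerivAt_energy hu hp t).add (((hasDerivAt_neg t).exp).const_mul (M * C))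
  have hanti : AntitoneOn G (Ici 0) := by
    refine antitoneOn_of_hasDerivWithinAt_nonpos (convex_Ici 0)
      (fun t _ => (hG t).continuousAt.continuousWithinAt) (fun t _ => (hG t).hasDerivWithinAt)
      fun t ht => ?_
    rw [interior_Ici] at ht
    rw [show deriv (deriv u) t + a * u t + u t ^ p = g t - b * deriv u t by
      linarith [heq t ht.le]]
    nlinarith [le_abs_self (deriv u t * g t), abs_deriv_mul_le hu' hg t ht.le,
      mul_nonneg hb (sq_nonneg (deriv u t))]
  have hbdd : BddBelow (G '' Ici 0) := by
    refine ⟨-(|a| * M ^ 2 / 2), ?_⟩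
    rintro _ ⟨t, ht, rfl⟩
    have hsq : u t ^ 2 ≤ M ^ 2 := pow_le_pow_left₀ (hpos t ht) (hu_le t ht) 2
    have hpow : 0 ≤ u t ^ (p + 1) / (p + 1) := by
      have := rpow_nonneg (hpos t ht) (p + 1); positivity
    simp only [G, energy]
    nlinarith [neg_abs_le a, sq_nonneg (deriv u t), sq_nonneg (u t), abs_nonneg a,
      mul_nonneg (mul_nonneg hM hC) (exp_pos (-t)).le]
  obtain ⟨L, hL⟩ := hanti.exists_tendsto_atTop hbdd
  exact ⟨L, by simpa [G] using hL.sub (tendsto_exp_neg_atTop_nhds_zero.const_mul (M * C))⟩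

theorem tendsto_deriv_zero (hu : ContDiff ℝ 2 u) (hb : 0 < b) (hp : 0 ≤ p) (hC : 0 ≤ C)
    (hpos : ∀ t ≥ 0, 0 ≤ u t) (hu_le : ∀ t ≥ 0, u t ≤ M) (hu' : ∀ t ≥ 0, |deriv u t| ≤ M)
    (heq : ∀ t ≥ 0, deriv (deriv u) t + b * deriv u t + a * u t + u t ^ p = g t)
    (hg : ∀ t ≥ 0, |g t| ≤ C * exp (-t)) :
    Tendsto (deriv u) atTop (𝓝 0) := by
  obtain ⟨L, hL⟩ := exists_tendsto_energy hu hb.le hp hC hpos hu_le hu' heq hg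
  obtain ⟨K, hK⟩ := exists_abs_deriv_deriv_le hp hC hpos hu_le hu' heq hg
  have hM : 0 ≤ M := (abs_nonneg _).trans (hu' 0 le_rfl)
  have hsq : Tendsto (fun t => deriv u t ^ 2) atTop (𝓝 0) := by
    refine tendsto_zero_of_hasDerivAt_add (F := fun t => -energy a p u t / b)
      (k := fun t => -(deriv u t * g t) / b) (T := 0) (fun t ht => ?_) (hL.neg.div_const b)
      ?_ ?_
    · refine ((hasDerivAt_energy hu hp t).neg.div_const b).congr_deriv ?_
      rw [show deriv (deriv u) t + a * u t + u t ^ p = g t - b * deriv u t by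
        linarith [heq t ht]]
      field_simp
      ring
    · refine uniformContinuousOn_of_hasDerivAt_of_abs_le (C := 2 * M * K) (convex_Ici 0)
        (fun t _ => (hu.differentiable_deriv_two t).hasDerivAt.pow 2) fun t ht => ?_
      rw [Nat.cast_ofNat, pow_one, abs_mul, abs_mul, abs_two, mul_assoc, mul_assoc]
      exact mul_le_mul_of_nonneg_left (mul_le_mul (hu' t ht) (hK t ht) (abs_nonneg _) hM)
        zero_le_two
    · refine tendsto_zero_of_abs_le_mul_exp_neg (C := M * C / b) (T := 0) fun t ht => ?_
      rw [abs_div, abs_neg, abs_of_pos hb, div_mul_eq_mul_div]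
      exact div_le_div_of_nonneg_right (abs_deriv_mul_le hu' hg t ht) hb.le
  rw [tendsto_zero_iff_abs_tendsto_zero]
  simpa [Function.comp_def, sqrt_sq_eq_abs] using hsq.sqrt

theorem tendsto_mul_add_rpow_zero (hu : ContDiff ℝ 2 u) (hp : 1 ≤ p) (hpos : ∀ t ≥ 0, 0 ≤ u t)
    (hu_le : ∀ t ≥ 0, u t ≤ M) (hu' : ∀ t ≥ 0, |deriv u t| ≤ M)
    (heq : ∀ t ≥ 0, deriv (deriv u) t + b * deriv u t + a * u t + u t ^ p = g t)
    (hg : ∀ t ≥ 0, |g t| ≤ C * exp (-t)) (hu'_lim : Tendsto (deriv u) atTop (𝓝 0)) :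
    Tendsto (fun t => a * u t + u t ^ p) atTop (𝓝 0) := by
  have hM : 0 ≤ M := (abs_nonneg _).trans (hu' 0 le_rfl)
  refine tendsto_zero_of_hasDerivAt_add (F := fun t => -deriv u t)
    (k := fun t => b * deriv u t - g t) (T := 0) (fun t ht => ?_) (by simpa using hu'_lim.neg)
    ?_ (by simpa using (hu'_lim.const_mul b).sub (tendsto_zero_of_abs_le_mul_exp_neg hg))
  · exact (hu.differentiable_deriv_two t).hasDerivAt.neg.congr_deriv (by linarith [heq t ht])
  · have hu₁ (t : ℝ) := (hu.differentiable two_ne_zero t).hasDerivAt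
    refine uniformContinuousOn_of_hasDerivAt_of_abs_le (C := |a| * M + M * p * M ^ (p - 1))
      (convex_Ici 0) (fun t _ => ((hu₁ t).const_mul a).add ((hu₁ t).rpow_const (.inr hp)))
      fun t ht => ?_
    have hpow : u t ^ (p - 1) ≤ M ^ (p - 1) := rpow_le_rpow (hpos t ht) (hu_le t ht) (by linarith)
    have hau' : |a * deriv u t| ≤ |a| * M := by
      rw [abs_mul]; exact mul_le_mul_of_nonneg_left (hu' t ht) (abs_nonneg a)
    have hpu' : |deriv u t * p * u t ^ (p - 1)| ≤ M * p * M ^ (p - 1) := by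
      rw [abs_mul, abs_mul, abs_of_nonneg (by linarith : 0 ≤ p),
        abs_of_nonneg (rpow_nonneg (hpos t ht) _)]
      exact mul_le_mul (mul_le_mul_of_nonneg_right (hu' t ht) (by linarith)) hpow
        (rpow_nonneg (hpos t ht) _) (mul_nonneg hM (by linarith))
    linarith [abs_add_le (a * deriv u t) (deriv u t * p * u t ^ (p - 1))]

end BoundedSolution

theorem stmt_14_general (a b p C₀ : ℝ) (hb : 0 < b) (ha : a < 0) (hp : 1 < p)
    (u g : ℝ → ℝ) (hu : ContDiff ℝ 2 u)
    (hupos : ∀ t ≥ (0 : ℝ), 0 < u t)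
    (hbdd : ∃ M : ℝ, ∀ t ≥ (0 : ℝ), |u t| + |deriv u t| ≤ M)
    (heq : ∀ t ≥ (0 : ℝ),
      deriv (deriv u) t + b * deriv u t + a * u t + u t ^ p = g t)
    (hg : ∀ t ≥ (0 : ℝ), |g t| ≤ C₀ * u t ^ p * Real.exp (-t)) :
    Tendsto (deriv u) atTop (nhds 0) ∧
    Tendsto (deriv (deriv u)) atTop (nhds 0) ∧
    (Tendsto u atTop (nhds 0) ∨ Tendsto u atTop (nhds ((-a) ^ (1 / (p - 1))))) := by
  obtain ⟨M, hM⟩ := hbdd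
  have hpos (t : ℝ) (ht : 0 ≤ t) : 0 ≤ u t := (hupos t ht).le
  have hu_le (t : ℝ) (ht : 0 ≤ t) : u t ≤ M := by
    linarith [le_abs_self (u t), abs_nonneg (deriv u t), hM t ht]
  have hu' (t : ℝ) (ht : 0 ≤ t) : |deriv u t| ≤ M := by linarith [abs_nonneg (u t), hM t ht]
  have hg' (t : ℝ) (ht : 0 ≤ t) : |g t| ≤ |C₀| * M ^ p * exp (-t) := by
    refine (hg t ht).trans (mul_le_mul_of_nonneg_right ?_ (exp_pos _).le)
    exact mul_le_mul (le_abs_self C₀) (rpow_le_rpow (hpos t ht) (hu_le t ht) (by linarith))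
      (rpow_nonneg (hpos t ht) p) (abs_nonneg C₀)
  have hC : 0 ≤ |C₀| * M ^ p :=
    mul_nonneg (abs_nonneg C₀) (rpow_nonneg ((hpos 0 le_rfl).trans (hu_le 0 le_rfl)) p)
  have hu'_lim := tendsto_deriv_zero hu hb (by linarith) hC hpos hu_le hu' heq hg'
  have hW := tendsto_mul_add_rpow_zero hu hp.le hpos hu_le hu' heq hg' hu'_lim
  refine ⟨hu'_lim, ?_, tendsto_zero_or_tendsto_of_tendsto_mul_add_rpow ha hp hu.continuous
    (eventually_atTop.2 ⟨0, hupos⟩) hW⟩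
  have hu'' : Tendsto (fun t => g t - b * deriv u t - (a * u t + u t ^ p)) atTop (𝓝 0) := by
    simpa using ((tendsto_zero_of_abs_le_mul_exp_neg hg').sub (hu'_lim.const_mul b)).sub hW
  refine hu''.congr' ?_
  filter_upwards [eventually_ge_atTop 0] with t ht
  linarith [heq t ht]

theorem stmt_14 (a b p C₀ : ℝ) (hb : 0 < b) (ha : a < 0) (hp : 1 < p) (hC₀ : 0 < C₀)
    (u g : ℝ → ℝ) (hu : ContDiff ℝ 2 u)
    (hupos : ∀ t ≥ (0 : ℝ), 0 < u t)
    (hbdd : ∃ M : ℝ, ∀ t ≥ (0 : ℝ), |u t| + |deriv u t| ≤ M)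
    (heq : ∀ t ≥ (0 : ℝ),
      deriv (deriv u) t + b * deriv u t + a * u t + u t ^ p = g t)
    (hg : ∀ t ≥ (0 : ℝ), |g t| ≤ C₀ * u t ^ p * Real.exp (-t)) :
    Tendsto (deriv u) atTop (nhds 0) ∧
    Tendsto (deriv (deriv u)) atTop (nhds 0) ∧
    (Tendsto u atTop (nhds 0) ∨ Tendsto u atTop (nhds ((-a) ^ (1 / (p - 1))))) :=
  stmt_14_general a b p C₀ hb ha hp u g hu hupos hbdd heq hg
end

section
/- Let $b > 0$, $\lambda_1 < \lambda_2 < 0$, $T_0 > 0$, $\mu_1 \le \mu_2 < 0$ with $\mu_i = \lambda_i$, and let $\xi : [T_0, \infty) \to \mathbb{R}$ be continuous and satisfy, for some constants $C > 0$ and $0 < \epsilon < -\mu_2$, the integral inequality $|\xi(t)| \leq C e^{\mu_1 t} + C e^{\mu_2 t} + C e^{-t} + \frac{\epsilon}{4} e^{\mu_1 t} \int_{T_0}^t e^{-\mu_1 s} |\xi(s)|\, ds + \frac{\epsilon}{4} e^{\mu_2 t} \int_{T_0}^t e^{-\mu_2 s} |\xi(s)|\, ds$ for all $t \geq T_0$.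 Then there exists $C' > 0$ such that $|\xi(t)| \leq C' e^{-(\alpha_0 - \epsilon/2) t}$ for all $t \geq T_0$, where $\alpha_0 = \min\{-\mu_2, 1\}$. -/
/-!
With `a = min (-μ₂) 1`, the weighted function `w t = exp (a t) |ξ t|` satisfies the linear
integral inequality `w t ≤ 3C + (ε/2) ∫_{T₀}^t w`: the forcing terms are all `O(exp (-a t))`,
and since `μ₁ ≤ μ₂ ≤ -a` both memory kernels `exp (μᵢ (t - s))` are dominated by `exp (-a (t - s))`.
Grönwall's inequality then gives `w t ≤ 3C exp ((ε/2)(t - T₀))`.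
-/

open Set intervalIntegral

open Real in
theorem gronwallBound_zero_mul_add (K c x : ℝ) :
    K * gronwallBound 0 K c x + c = c * exp (K * x) := by
  rcases eq_or_ne K 0 with rfl | hK
  · simp
  · rw [gronwallBound_of_K_ne_0 hK]
    field_simp
    ring

theorem le_mul_exp_of_le_add_mul_integral {u : ℝ → ℝ} {a c K : ℝ} (hu : Continuous u)
    (hK : 0 ≤ K) (bound : ∀ t ≥ a, u t ≤ c + K * ∫ s in a..t, u s) :
    ∀ t ≥ a, u t ≤ c * Real.exp (K * (t - a)) := by
  intro t ht
  have hU : ∀ x, HasDerivAt (fun y => ∫ s in a..y, u s) (u x) x := fun x =>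
    (hu.integral_hasStrictDerivAt a x).hasDerivAt
  have hUt : (∫ s in a..t, u s) ≤ gronwallBound 0 K c (t - a) := by
    refine le_gronwallBound_of_liminf_deriv_right_le (f' := u) (b := t)
      (fun x _ => (hU x).continuousAt.continuousWithinAt)
      (fun x _ _ hr => (hU x).hasDerivWithinAt.liminf_right_slope_le hr)
      (by simp) (fun x hx => ?_) t ⟨ht, le_rfl⟩
    linarith [bound x hx.1]
  calc u t ≤ c + K * ∫ s in a..t, u s := bound t ht
    _ ≤ c + K * gronwallBound 0 K c (t - a) := by gcongr
    _ = c * Real.exp (K * (t - a)) := by rw [add_comm, gronwallBound_zero_mul_add]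

theorem exp_mul_integral_exp_neg_mul_le {μ ν T t : ℝ} {g : ℝ → ℝ} (hμν : μ ≤ ν) (hTt : T ≤ t)
    (hg : Continuous g) (hg₀ : ∀ s ∈ Icc T t, 0 ≤ g s) :
    Real.exp (μ * t) * ∫ s in T..t, Real.exp (-μ * s) * g s
      ≤ Real.exp (ν * t) * ∫ s in T..t, Real.exp (-ν * s) * g s := by
  rw [← integral_const_mul, ← integral_const_mul]
  refine integral_mono_on hTt ((by fun_prop : Continuous _).intervalIntegrable _ _)
    ((by fun_prop : Continuous _).intervalIntegrable _ _) fun s hs => ?_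
  rw [← mul_assoc, ← mul_assoc, ← Real.exp_add, ← Real.exp_add]
  exact mul_le_mul_of_nonneg_right (Real.exp_le_exp.2 (by nlinarith [hs.2])) (hg₀ s hs)

theorem mul_mul_exp_le_one {ε μ t : ℝ} (hεμ : ε ≤ -μ) (ht : 0 ≤ t) :
    ε * t * Real.exp (μ * t) ≤ 1 := by
  calc ε * t * Real.exp (μ * t) ≤ Real.exp (-μ * t) * Real.exp (μ * t) := by
        gcongr
        linarith [Real.add_one_le_exp (-μ * t), mul_le_mul_of_nonneg_right hεμ ht]
    _ = 1 := by rw [← Real.exp_add]; simp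

theorem exp_mul_abs_le_add_integral {μ₁ μ₂ a T₀ C ε t : ℝ} {ξ : ℝ → ℝ} (hμ : μ₁ ≤ μ₂)
    (ha₂ : a ≤ -μ₂) (ha₁ : a ≤ 1) (hT₀ : 0 ≤ T₀) (hC : 0 ≤ C) (hε₀ : 0 ≤ ε) (hε : ε ≤ -μ₁)
    (hξ : Continuous ξ) (ht : T₀ ≤ t)
    (hξt : |ξ t| ≤
      C * Real.exp (μ₁ * t) + C * Real.exp (μ₂ * t) + C * Real.exp (-t)
        + (ε / 4) * Real.exp (μ₁ * t) * ∫ s in T₀..t, Real.exp (-μ₁ * s) * |ξ s|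
        + (ε / 4) * Real.exp (μ₂ * t) * ∫ s in T₀..t, Real.exp (-μ₂ * s) * |ξ s|) :
    Real.exp (a * t) * |ξ t| ≤ 3 * C + ε / 2 * ∫ s in T₀..t, Real.exp (a * s) * |ξ s| := by
  have ht₀ : 0 ≤ t := hT₀.trans ht
  have hξ₀ : ∀ s ∈ Icc T₀ t, 0 ≤ |ξ s| := fun s _ => abs_nonneg _
  set F := ∫ s in T₀..t, Real.exp (-μ₂ * s) * |ξ s|
  set X := Real.exp (-a * t) * ∫ s in T₀..t, Real.exp (a * s) * |ξ s|
  have hF : Real.exp (μ₂ * t) * F ≤ X := by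
    simpa only [neg_neg] using
      exp_mul_integral_exp_neg_mul_le (by linarith) ht hξ.abs hξ₀ (ν := -a)
  have hforcing : C * Real.exp (μ₁ * t) + C * Real.exp (μ₂ * t) + C * Real.exp (-t)
      ≤ 3 * C * Real.exp (-a * t) := by
    have h₁ : Real.exp (μ₁ * t) ≤ Real.exp (-a * t) := by gcongr; linarith
    have h₂ : Real.exp (μ₂ * t) ≤ Real.exp (-a * t) := by gcongr; linarith
    have h₃ : Real.exp (-t) ≤ Real.exp (-a * t) := by gcongr; nlinarith
    nlinarith
  -- `∫` extends as far right as possible, so in `hξt` the second memory term lies inside the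
  -- first integrand, as a constant in `s`.
  have hmemory : ε / 4 * Real.exp (μ₁ * t) *
      ∫ s in T₀..t, (Real.exp (-μ₁ * s) * |ξ s| + ε / 4 * Real.exp (μ₂ * t) * F) ≤ ε / 2 * X := by
    rw [integral_add ((by fun_prop : Continuous _).intervalIntegrable _ _) intervalIntegrable_const,
      integral_const, smul_eq_mul]
    have h₁ := exp_mul_integral_exp_neg_mul_le hμ ht hξ.abs hξ₀
    have h₂ : ε / 4 * (t - T₀) * Real.exp (μ₁ * t) ≤ 1 := by
      nlinarith [mul_mul_exp_le_one hε ht₀,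
        mul_nonneg (mul_nonneg hε₀ hT₀) (Real.exp_pos (μ₁ * t)).le]
    have h₃ : 0 ≤ Real.exp (μ₂ * t) * F :=
      mul_nonneg (Real.exp_pos _).le (integral_nonneg ht fun s _ => by positivity)
    calc _ = ε / 4 * (Real.exp (μ₁ * t) * ∫ s in T₀..t, Real.exp (-μ₁ * s) * |ξ s|)
          + ε / 4 * (ε / 4 * (t - T₀) * Real.exp (μ₁ * t)) * (Real.exp (μ₂ * t) * F) := by ring
      _ ≤ ε / 4 * (Real.exp (μ₂ * t) * F) + ε / 4 * 1 * (Real.exp (μ₂ * t) * F) := by gcongr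
      _ ≤ ε / 2 * X := by nlinarith
  have hexp : Real.exp (a * t) * Real.exp (-a * t) = 1 := by rw [← Real.exp_add]; simp
  calc Real.exp (a * t) * |ξ t| ≤ Real.exp (a * t) * (3 * C * Real.exp (-a * t) + ε / 2 * X) := by
        gcongr; linarith
    _ = 3 * C + ε / 2 * ∫ s in T₀..t, Real.exp (a * s) * |ξ s| := by
        linear_combination (3 * C + ε / 2 * ∫ s in T₀..t, Real.exp (a * s) * |ξ s|) * hexp

theorem stmt_18_general (l₁ l₂ T₀ C ε : ℝ) (hl : l₁ < l₂) (hl₂ : l₂ < 0)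
    (hT₀ : 0 < T₀) (hC : 0 < C) (hε₀ : 0 < ε) (hε : ε < -l₂)
    (μ₁ μ₂ α₀ : ℝ) (hμ₁ : μ₁ = l₁) (hμ₂ : μ₂ = l₂) (hα₀ : α₀ = min (-μ₂) 1)
    (ξ : ℝ → ℝ) (hξ : Continuous ξ)
    (hineq : ∀ t ≥ T₀, |ξ t| ≤
      C * Real.exp (μ₁ * t) + C * Real.exp (μ₂ * t) + C * Real.exp (-t)
        + (ε / 4) * Real.exp (μ₁ * t) * ∫ s in T₀..t, Real.exp (-μ₁ * s) * |ξ s|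
        + (ε / 4) * Real.exp (μ₂ * t) * ∫ s in T₀..t, Real.exp (-μ₂ * s) * |ξ s|) :
    ∃ C' > 0, ∀ t ≥ T₀, |ξ t| ≤ C' * Real.exp (-(α₀ - ε / 2) * t) := by
  subst hμ₁ hμ₂ hα₀
  set a := min (-μ₂) 1
  have ha₂ : a ≤ -μ₂ := min_le_left _ _
  have ha₁ : a ≤ 1 := min_le_right _ _
  have hw : ∀ t ≥ T₀, Real.exp (a * t) * |ξ t|
      ≤ 3 * C + ε / 2 * ∫ s in T₀..t, Real.exp (a * s) * |ξ s| := fun t ht =>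
    exp_mul_abs_le_add_integral hl.le ha₂ ha₁ hT₀.le hC.le hε₀.le (by linarith) hξ ht (hineq t ht)
  have hgronwall := le_mul_exp_of_le_add_mul_integral (by fun_prop) (by positivity) hw
  refine ⟨3 * C, by positivity, fun t ht => ?_⟩
  calc |ξ t| = Real.exp (-a * t) * (Real.exp (a * t) * |ξ t|) := by
        rw [← mul_assoc, ← Real.exp_add]; simp
    _ ≤ Real.exp (-a * t) * (3 * C * Real.exp (ε / 2 * (t - T₀))) :=
        mul_le_mul_of_nonneg_left (hgronwall t ht) (Real.exp_pos _).le
    _ = 3 * C * Real.exp (-(a - ε / 2) * t - ε / 2 * T₀) := by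
        rw [mul_left_comm, ← Real.exp_add]; ring_nf
    _ ≤ 3 * C * Real.exp (-(a - ε / 2) * t) := by gcongr; nlinarith

theorem stmt_18 (b l₁ l₂ T₀ C ε : ℝ) (hb : 0 < b) (hl : l₁ < l₂) (hl₂ : l₂ < 0)
    (hT₀ : 0 < T₀) (hC : 0 < C) (hε₀ : 0 < ε) (hε : ε < -l₂)
    (μ₁ μ₂ α₀ : ℝ) (hμ₁ : μ₁ = l₁) (hμ₂ : μ₂ = l₂) (hα₀ : α₀ = min (-μ₂) 1)
    (ξ : ℝ → ℝ) (hξ : Continuous ξ)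
    (hineq : ∀ t ≥ T₀, |ξ t| ≤
      C * Real.exp (μ₁ * t) + C * Real.exp (μ₂ * t) + C * Real.exp (-t)
        + (ε / 4) * Real.exp (μ₁ * t) * ∫ s in T₀..t, Real.exp (-μ₁ * s) * |ξ s|
        + (ε / 4) * Real.exp (μ₂ * t) * ∫ s in T₀..t, Real.exp (-μ₂ * s) * |ξ s|) :
    ∃ C' > 0, ∀ t ≥ T₀, |ξ t| ≤ C' * Real.exp (-(α₀ - ε / 2) * t) :=
  stmt_18_general l₁ l₂ T₀ C ε hl hl₂ hT₀ hC hε₀ hε μ₁ μ₂ α₀ hμ₁ hμ₂ hα₀ ξ hξ hineq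
end
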